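/- Let b₁, b₂ be integers with b₁ ≥ 0 and b₁ ≥ b₂. Let α : ℂ[x₁,…,x₆] → ℂ[y₁^{±1}, y₂^{±1}, y₃^{±1}] be the ℂ-algebra homomorphism determined by α(x₁) = y₁, α(x₂) = y₂, α(x₃) = y₁y₂^{−1}, α(x₄) = y₁^{−b₁−1}y₂y₃, α(x₅) = y₁^{−b₂−1}y₂y₃, α(x₆) = y₃. Then the kernel of α equals the ideal generated by the three binomials x₁ − x₂x₃, x₂^{b₁} x₃^{b₁+1} x₄ − x₆, and x₂^{b₁−b₂} x₃^{b₁−b₂} x₄ − x₅. -/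

import Mathlib

/-!
Modulo the three binomials, `x₁`, `x₅` and `x₆` are congruent to monomials in `x₂, x₃, x₄`, so
every polynomial is congruent to one in `ℂ[x₂, x₃, x₄]`. On that subring `α` is the monomial map
with exponent vectors `(0, 1, 0)`, `(1, -1, 0)`, `(-b₁ - 1, 1, 1)`, which are linearly independent,
so `α` is injective there and every element of `ker α` already lies in the binomial ideal.
Conversely, the two monomials of each binomial have the same image under `α`.
-/

open MvPolynomial

/-- The Laurent monomial `y₁^{v 0} y₂^{v 1} y₃^{v 2}` in the Laurent polynomial ring
`ℂ[y₁^{±1}, y₂^{±1}, y₃^{±1}]`, realized as `AddMonoidAlgebra ℂ (Fin 3 → ℤ)`. -/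
noncomputable def laurentMonomial3 (v : Fin 3 → ℤ) : AddMonoidAlgebra ℂ (Fin 3 → ℤ) :=
  AddMonoidAlgebra.single v 1

theorem RingHom.ker_eq_of_le_ker_of_injective_comp {R A S F G : Type*} [CommRing R] [Ring A]
    [Ring S] [FunLike F R S] [RingHomClass F R S] [FunLike G A R] [RingHomClass G A R]
    {α : F} {ι : G} {I : Ideal R} (hI : I ≤ RingHom.ker α)
    (hinj : Function.Injective fun g ↦ α (ι g)) (hcover : ∀ f, ∃ g, f - ι g ∈ I) :
    RingHom.ker α = I := by
  refine le_antisymm (fun f hf ↦ ?_) hI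
  obtain ⟨g, hg⟩ := hcover f
  have hαg : α (ι g) = α (ι 0) := by
    have := hI hg
    rw [RingHom.mem_ker, map_sub, RingHom.mem_ker.mp hf, zero_sub, neg_eq_zero] at this
    rw [this, map_zero, map_zero]
  rwa [hinj hαg, map_zero, sub_zero] at hg

theorem MvPolynomial.sub_mem_of_forall_X_sub_mem {σ R : Type*} [CommRing R]
    {I : Ideal (MvPolynomial σ R)} (φ : MvPolynomial σ R →ₐ[R] MvPolynomial σ R)
    (h : ∀ i, X i - φ (X i) ∈ I) (f : MvPolynomial σ R) : f - φ f ∈ I := by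
  have : (Ideal.Quotient.mkₐ R I).comp φ = Ideal.Quotient.mkₐ R I :=
    algHom_ext fun i ↦ ((Ideal.Quotient.mk_eq_mk_iff_sub_mem _ _).mpr (h i)).symm
  rw [← Ideal.Quotient.mk_eq_mk_iff_sub_mem]
  exact (AlgHom.congr_fun this f).symm

theorem MvPolynomial.aeval_single_one_injective {σ R M : Type*} [CommSemiring R]
    [AddCommMonoid M] {w : σ → M} (hw : LinearIndependent ℕ w) :
    Function.Injective
      (aeval fun i ↦ AddMonoidAlgebra.single (w i) (1 : R) :
        MvPolynomial σ R →ₐ[R] AddMonoidAlgebra R M) := by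
  have : (aeval fun i ↦ AddMonoidAlgebra.single (w i) (1 : R) :
        MvPolynomial σ R →ₐ[R] AddMonoidAlgebra R M) =
      AddMonoidAlgebra.mapDomainAlgHom R R (Finsupp.linearCombination ℕ w).toAddMonoidHom := by
    refine algHom_ext fun i ↦ ?_
    rw [aeval_X, X, ← single_eq_monomial]
    simp
  rw [this]
  exact AddMonoidAlgebra.mapDomain_injective hw

@[simp]
theorem laurentMonomial3_mul (a b : Fin 3 → ℤ) :
    laurentMonomial3 a * laurentMonomial3 b = laurentMonomial3 (a + b) := by
  simp [laurentMonomial3, AddMonoidAlgebra.single_mul_single]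

@[simp]
theorem laurentMonomial3_pow (a : Fin 3 → ℤ) (n : ℕ) :
    laurentMonomial3 a ^ n = laurentMonomial3 (n • a) := by
  simp [laurentMonomial3, AddMonoidAlgebra.single_pow]

namespace ToricCase314

variable (b₁ b₂ : ℤ)

noncomputable def toricMap : MvPolynomial (Fin 6) ℂ →ₐ[ℂ] AddMonoidAlgebra ℂ (Fin 3 → ℤ) :=
  aeval ![laurentMonomial3 ![1, 0, 0], laurentMonomial3 ![0, 1, 0],
    laurentMonomial3 ![1, -1, 0], laurentMonomial3 ![-(b₁ + 1), 1, 1],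
    laurentMonomial3 ![-(b₂ + 1), 1, 1], laurentMonomial3 ![0, 0, 1]]

noncomputable def binomialIdeal : Ideal (MvPolynomial (Fin 6) ℂ) :=
  Ideal.span {X 0 - X 1 * X 2, X 1 ^ b₁.toNat * X 2 ^ (b₁ + 1).toNat * X 3 - X 5,
    X 1 ^ (b₁ - b₂).toNat * X 2 ^ (b₁ - b₂).toNat * X 3 - X 4}

/-- Here `X 0, X 1, X 2` stand for `x₂, x₃, x₄`; `rename ![1, 2, 3]` puts them back in place. -/
noncomputable def elimination : MvPolynomial (Fin 6) ℂ →ₐ[ℂ] MvPolynomial (Fin 3) ℂ :=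
  aeval ![X 0 * X 1, X 0, X 1, X 2, X 0 ^ (b₁ - b₂).toNat * X 1 ^ (b₁ - b₂).toNat * X 2,
    X 0 ^ b₁.toNat * X 1 ^ (b₁ + 1).toNat * X 2]

variable {b₁ b₂} in
theorem binomialIdeal_le_ker (hb₁ : 0 ≤ b₁) (hb₂ : b₂ ≤ b₁) :
    binomialIdeal b₁ b₂ ≤ RingHom.ker (toricMap b₁ b₂) := by
  rw [binomialIdeal, Ideal.span_le]
  rintro g (rfl | rfl | rfl) <;>
    simp only [SetLike.mem_coe, RingHom.mem_ker, toricMap, map_sub, map_mul, map_pow, aeval_X,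
      Matrix.cons_val, laurentMonomial3_pow, laurentMonomial3_mul, sub_eq_zero] <;>
    congr 1 <;> funext j <;> fin_cases j <;> simp <;> omega

theorem X_sub_rename_elimination_mem (i : Fin 6) :
    X i - rename ![1, 2, 3] (elimination b₁ b₂ (X i)) ∈ binomialIdeal b₁ b₂ := by
  have generator_mem {p} (hp : p ∈ ({X 0 - X 1 * X 2,
      X 1 ^ b₁.toNat * X 2 ^ (b₁ + 1).toNat * X 3 - X 5,
      X 1 ^ (b₁ - b₂).toNat * X 2 ^ (b₁ - b₂).toNat * X 3 - X 4} :
        Set (MvPolynomial (Fin 6) ℂ))) : p ∈ binomialIdeal b₁ b₂ :=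
    Ideal.subset_span hp
  fin_cases i <;> simp [elimination]
  · exact generator_mem (by simp)
  · exact neg_sub _ (X 4 : MvPolynomial (Fin 6) ℂ) ▸ neg_mem (generator_mem (by simp))
  · exact neg_sub _ (X 5 : MvPolynomial (Fin 6) ℂ) ▸ neg_mem (generator_mem (by simp))

theorem sub_rename_elimination_mem (f : MvPolynomial (Fin 6) ℂ) :
    f - rename ![1, 2, 3] (elimination b₁ b₂ f) ∈ binomialIdeal b₁ b₂ :=
  sub_mem_of_forall_X_sub_mem ((rename _).comp (elimination b₁ b₂))
    (X_sub_rename_elimination_mem b₁ b₂) f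

theorem linearIndependent_exponents :
    LinearIndependent ℕ (![![0, 1, 0], ![1, -1, 0], ![-(b₁ + 1), 1, 1]] : Fin 3 → Fin 3 → ℤ) := by
  refine .restrict_scalars' ℕ (K := ℤ) (Fintype.linearIndependent_iff.mpr fun c hc ↦ ?_)
  have h0 := congrFun hc 0
  have h1 := congrFun hc 1
  have h2 := congrFun hc 2
  simp [Fin.sum_univ_three] at h0 h1 h2
  rw [h2] at h0 h1
  intro i
  fin_cases i <;> simp <;> omega

theorem toricMap_comp_rename_injective :
    Function.Injective ((toricMap b₁ b₂).comp (rename ![1, 2, 3])) := by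
  have : (toricMap b₁ b₂).comp (rename ![1, 2, 3]) =
      aeval fun i ↦ AddMonoidAlgebra.single (![![0, 1, 0], ![1, -1, 0], ![-(b₁ + 1), 1, 1]] i) 1 :=
    algHom_ext fun i ↦ by fin_cases i <;> simp [toricMap, laurentMonomial3]
  rw [this]
  exact aeval_single_one_injective (linearIndependent_exponents b₁)

end ToricCase314

theorem toric_ideal_case_3_1_4 (b₁ b₂ : ℤ) (hb₁ : 0 ≤ b₁) (hb₂ : b₂ ≤ b₁) :
    RingHom.ker (MvPolynomial.aeval
        ![laurentMonomial3 ![1, 0, 0], laurentMonomial3 ![0, 1, 0],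
          laurentMonomial3 ![1, -1, 0], laurentMonomial3 ![-(b₁ + 1), 1, 1],
          laurentMonomial3 ![-(b₂ + 1), 1, 1], laurentMonomial3 ![0, 0, 1]] :
      MvPolynomial (Fin 6) ℂ →ₐ[ℂ] AddMonoidAlgebra ℂ (Fin 3 → ℤ)) =
    Ideal.span {(X 0 - X 1 * X 2 : MvPolynomial (Fin 6) ℂ),
      X 1 ^ b₁.toNat * X 2 ^ (b₁ + 1).toNat * X 3 - X 5,
      X 1 ^ (b₁ - b₂).toNat * X 2 ^ (b₁ - b₂).toNat * X 3 - X 4} :=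
  RingHom.ker_eq_of_le_ker_of_injective_comp (ι := rename ![1, 2, 3])
    (ToricCase314.binomialIdeal_le_ker hb₁ hb₂)
    (ToricCase314.toricMap_comp_rename_injective b₁ b₂)
    fun f ↦ ⟨_, ToricCase314.sub_rename_elimination_mem b₁ b₂ f⟩
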